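/- arXiv:1612.08762 — 2 statements merged into one kernel-verified Lean document; each statement's English description precedes it below -/
import Mathlib

section
/- Assume A is finite. If a subshift K ⊆ X has a strictly positive g-function, then K is of finite type. -/
variable {A : Type*}

/-- The shift map on `X = ℕ → A`, deleting the last symbol `x 0`. -/
def shiftMap : (ℕ → A) → (ℕ → A) := fun x n => x (n + 1)

/-- The extension `(x, a)` of the sequence `x` by the symbol `a`. -/
def extend (x : ℕ → A) (a : A) : ℕ → A := fun n => Nat.casesOn n a x

/-- The exit set `E_K` of a set `K ⊆ X`. -/
def exitSet (K : Set (ℕ → A)) : Set (ℕ → A) := {x | x ∉ K ∧ shiftMap x ∈ K}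

/-- Property `G`: there is no `x` with `(x, a)` in the closure of `E_K` for every `a`. -/
def PropertyG [TopologicalSpace A] (K : Set (ℕ → A)) : Prop :=
  ¬ ∃ x : ℕ → A, ∀ a : A, extend x a ∈ closure (exitSet K)

/-- A subshift: closed, nonempty and `Θ(K) = K`. -/
def IsSubshift [TopologicalSpace A] (K : Set (ℕ → A)) : Prop :=
  IsClosed K ∧ K.Nonempty ∧ shiftMap '' K = K

/-- A continuous `g`-function: `0 ≤ g ≤ 1` and the unconditional sum
`∑_{a ∈ A} g((x,a)) = 1` for every `x`. -/
def IsGFunction [TopologicalSpace A] (g : (ℕ → A) → ℝ) : Prop :=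
  Continuous g ∧ (∀ x, 0 ≤ g x) ∧ (∀ x, g x ≤ 1) ∧
    ∀ x : ℕ → A, HasSum (fun a : A => g (extend x a)) 1

/-- `K` is invariant for `g` if `g` vanishes on the exit set of `K`. -/
def InvariantFor (K : Set (ℕ → A)) (g : (ℕ → A) → ℝ) : Prop :=
  ∀ x ∈ exitSet K, g x = 0

/-- The word `w` (a nonempty finite tuple) appears in `x`. -/
def Appears (w : List A) (x : ℕ → A) : Prop :=
  ∃ i : ℕ, ∀ k : ℕ, ∀ h : k < w.length, x (i + k) = w.get ⟨k, h⟩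

/-- `X_F`: the set of all `x` in which no word of `F` appears. -/
def XofF (F : Set (List A)) : Set (ℕ → A) := {x | ∀ w ∈ F, ¬ Appears w x}

/-- A subshift of finite type: `K = X_F` for a finite set `F` of (nonempty) words. -/
def IsFiniteType (K : Set (ℕ → A)) : Prop :=
  ∃ F : Set (List A), F.Finite ∧ (∀ w ∈ F, w ≠ []) ∧ K = XofF F

/-- Every neighborhood of `x` contains a cylinder around `x`. -/
lemma mem_cylinder_of_nhds [TopologicalSpace A] [DiscreteTopology A]
    (x : ℕ → A) (s : Set (ℕ → A)) (hs : s ∈ nhds x) :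
    ∃ n : ℕ, ∀ y : ℕ → A, (∀ i < n, y i = x i) → y ∈ s := by
  rw [nhds_pi, Filter.mem_pi] at hs
  obtain ⟨I, hI, t, ht, hsub⟩ := hs
  obtain ⟨n, hn⟩ := hI.bddAbove
  refine ⟨n + 1, fun y hy => hsub fun i hi => ?_⟩
  have hyi : y i = x i := hy i (Nat.lt_succ_of_le (hn hi))
  rw [hyi]
  have := ht i
  rwa [nhds_discrete, Filter.mem_pure] at this

lemma cylinder_isOpen [TopologicalSpace A] [DiscreteTopology A] (x : ℕ → A) (n : ℕ) :
    IsOpen {y : ℕ → A | ∀ i < n, y i = x i} := by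
  have he : {y : ℕ → A | ∀ i < n, y i = x i}
      = Set.pi (Set.Iio n) (fun i => ({x i} : Set A)) := by
    ext y; simp [Set.mem_pi]
  rw [he]
  exact isOpen_set_pi (Set.finite_Iio n) fun i _ => isOpen_discrete _

/-- Uniform continuity on the compact space `ℕ → A`. -/
lemma uniform_cylinder [Finite A] [TopologicalSpace A] [DiscreteTopology A]
    (g : (ℕ → A) → ℝ) (hg : Continuous g) {ε : ℝ} (hε : 0 < ε) :
    ∃ N : ℕ, 0 < N ∧ ∀ x y : ℕ → A, (∀ i < N, x i = y i) → |g x - g y| < ε := by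
  have hball : ∀ x : ℕ → A, {y | |g y - g x| < ε / 2} ∈ nhds x := by
    intro x
    have hc : Continuous fun y => |g y - g x| := (hg.sub continuous_const).abs
    have h0 : |g x - g x| < ε / 2 := by simpa using half_pos hε
    exact hc.continuousAt.preimage_mem_nhds (Iio_mem_nhds h0)
  choose n hn using fun x => mem_cylinder_of_nhds x _ (hball x)
  obtain ⟨t, _, ht⟩ := isCompact_univ.elim_nhds_subcover
      (fun x => {y : ℕ → A | ∀ i < n x, y i = x i})
      (fun x _ => (cylinder_isOpen x (n x)).mem_nhds (fun i _ => rfl))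
  refine ⟨t.sup n + 1, Nat.succ_pos _, fun x y hxy => ?_⟩
  have hx : x ∈ ⋃ z ∈ t, {y : ℕ → A | ∀ i < n z, y i = z i} := ht (Set.mem_univ x)
  simp only [Set.mem_iUnion, Set.mem_setOf_eq] at hx
  obtain ⟨z, hzt, hxz⟩ := hx
  have hyz : ∀ i < n z, y i = z i := by
    intro i hi
    have hi' : i < t.sup n + 1 := Nat.lt_succ_of_lt (lt_of_lt_of_le hi (Finset.le_sup hzt))
    rw [← hxy i hi']
    exact hxz i hi
  have h1 : |g x - g z| < ε / 2 := hn z x hxz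
  have h2 : |g y - g z| < ε / 2 := hn z y hyz
  have h3 : |g x - g y| ≤ |g x - g z| + |g z - g y| := abs_sub_le _ _ _
  rw [abs_sub_comm (g z) (g y)] at h3
  linarith

lemma shift_iterate_apply (x : ℕ → A) (i n : ℕ) : (shiftMap^[i] x) n = x (n + i) := by
  induction i generalizing x n with
  | zero => rfl
  | succ i ih =>
    rw [Function.iterate_succ_apply, ih]
    rfl

lemma shift_iterate_mem {K : Set (ℕ → A)} (hK : shiftMap '' K = K) {x : ℕ → A}
    (hx : x ∈ K) (i : ℕ) : shiftMap^[i] x ∈ K := by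
  induction i with
  | zero => exact hx
  | succ i ih =>
    rw [Function.iterate_succ_apply', ← hK]
    exact ⟨_, ih, rfl⟩

lemma shiftMap_extend (z : ℕ → A) (a : A) : shiftMap (extend z a) = z := rfl

theorem strictly_positive_g_imp_finiteType
    [Nonempty A] [Finite A] [TopologicalSpace A] [DiscreteTopology A]
    (K : Set (ℕ → A)) (hK : IsSubshift K)
    (h : ∃ g : (ℕ → A) → ℝ, IsGFunction g ∧ InvariantFor K g ∧ ∀ x ∈ K, 0 < g x) :
    IsFiniteType K := by
  classical
  obtain ⟨g, ⟨hgc, hg0, _, _⟩, hginv, hgpos⟩ := h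
  obtain ⟨hKc, hKne, hKs⟩ := hK
  have hcomp : IsCompact K := hKc.isCompact
  obtain ⟨x0, hx0K, hx0min⟩ := hcomp.exists_isMinOn hKne hgc.continuousOn
  have hεpos : 0 < g x0 := hgpos x0 hx0K
  obtain ⟨N, hN0, hNuc⟩ := uniform_cylinder g hgc hεpos
  set F : Set (List A) :=
    {w | w.length = N ∧ ¬ ∃ y ∈ K, ∀ k : ℕ, ∀ hk : k < w.length, y k = w.get ⟨k, hk⟩}
    with hF
  refine ⟨F, ?_, ?_, ?_⟩
  · exact (List.finite_length_eq A N).subset fun w hw => hw.1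
  · intro w hw
    have := hw.1
    intro h0
    rw [h0] at this
    simp at this
    omega
  · ext x
    constructor
    · -- K ⊆ XofF F
      intro hxK w hwF ⟨i, hi⟩
      refine hwF.2 ⟨shiftMap^[i] x, shift_iterate_mem hKs hxK i, fun k hk => ?_⟩
      rw [shift_iterate_apply, Nat.add_comm]
      exact hi k hk
    · -- XofF F ⊆ K
      intro hx
      -- every window of length N is admissible
      have hwin : ∀ i : ℕ, ∃ y ∈ K, ∀ k < N, y k = x (i + k) := by
        intro i
        by_contra hcon
        push_neg at hcon
        set w : List A := List.ofFn (fun k : Fin N => x (i + k)) with hw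
        have hwl : w.length = N := List.length_ofFn
        have hget : ∀ (k : ℕ) (hk : k < w.length), w.get ⟨k, hk⟩ = x (i + k) := by
          intro k hk
          simp [hw]
        have hwF : w ∈ F := by
          refine ⟨hwl, fun ⟨y, hyK, hy⟩ => ?_⟩
          obtain ⟨k, hkN, hne⟩ := hcon y hyK
          exact hne (by rw [← hget k (hwl ▸ hkN)]; exact hy k (hwl ▸ hkN))
        exact hx w hwF ⟨i, fun k hk => (hget k hk).symm⟩
      by_contra hxK
      -- P m : some element of K agrees with x on the first m coordinates
      set P : ℕ → Prop := fun m => ∃ y ∈ K, ∀ k < m, y k = x k with hP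
      have hPN : P N := by
        obtain ⟨y, hyK, hy⟩ := hwin 0
        exact ⟨y, hyK, fun k hk => by rw [hy k hk, Nat.zero_add]⟩
      have hPanti : ∀ m m' : ℕ, m ≤ m' → P m' → P m := by
        rintro m m' hmm ⟨y, hyK, hy⟩
        exact ⟨y, hyK, fun k hk => hy k (lt_of_lt_of_le hk hmm)⟩
      have hnotall : ∃ m, ¬ P m := by
        by_contra hall
        push_neg at hall
        apply hxK
        rw [← hKc.closure_eq]
        rw [mem_closure_iff_nhds]
        intro s hs
        obtain ⟨n, hn⟩ := mem_cylinder_of_nhds x s hs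
        obtain ⟨y, hyK, hy⟩ := hall n
        exact ⟨y, hn y hy, hyK⟩
      set M : ℕ := Nat.find hnotall with hM
      have hMspec : ¬ P M := Nat.find_spec hnotall
      have hMmin : ∀ m < M, P m := fun m hm => of_not_not (Nat.find_min hnotall hm)
      have hNM : N < M := by
        by_contra hNM
        push_neg at hNM
        exact hMspec (hPanti M N hNM hPN)
      set m : ℕ := M - 1 with hm
      have hNm : N ≤ m := by omega
      have hPm : P m := hMmin m (by omega)
      have hPm1 : ¬ P (m + 1) := by
        have : m + 1 = M := by omega
        rw [this]; exact hMspec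
      -- S j : some element of K matches x on positions j..m
      set S : ℕ → Prop := fun j => ∃ z ∈ K, ∀ k : ℕ, j + k ≤ m → z k = x (j + k) with hS
      have hS0 : ¬ S 0 := by
        rintro ⟨z, hzK, hz⟩
        exact hPm1 ⟨z, hzK, fun k hk => by
          have := hz k (by omega)
          rwa [Nat.zero_add] at this⟩
      have hSw : S (m + 1 - N) := by
        obtain ⟨y, hyK, hy⟩ := hwin (m + 1 - N)
        exact ⟨y, hyK, fun k hk => hy k (by omega)⟩
      have hSex : ∃ j, S j := ⟨m + 1 - N, hSw⟩
      set j : ℕ := Nat.find hSex with hj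
      have hSj : S j := Nat.find_spec hSex
      have hjle : j ≤ m + 1 - N := Nat.find_min' hSex hSw
      have hj0 : j ≠ 0 := fun h0 => hS0 (h0 ▸ hSj)
      obtain ⟨j', hj'⟩ := Nat.exists_eq_succ_of_ne_zero hj0
      have hSj' : ¬ S j' := by
        have : j' < j := by omega
        exact Nat.find_min hSex this
      rw [hj'] at hSj hjle
      obtain ⟨z, hzK, hz⟩ := hSj
      set u : ℕ → A := extend z (x j') with hu
      have hu0 : u 0 = x j' := rfl
      have huk : ∀ k : ℕ, u (k + 1) = z k := fun k => rfl
      have huK : u ∉ K := by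
        intro huK
        apply hSj'
        refine ⟨u, huK, fun k hk => ?_⟩
        cases k with
        | zero => rw [Nat.add_zero]; exact hu0
        | succ k'' =>
          rw [huk k'', hz k'' (by omega)]
          congr 1
          omega
      have hguz : g u = 0 := hginv u ⟨huK, by rw [hu, shiftMap_extend]; exact hzK⟩
      obtain ⟨v, hvK, hv⟩ := hwin j'
      have hagree : ∀ i < N, u i = v i := by
        intro i hi
        cases i with
        | zero => rw [hu0, hv 0 hN0, Nat.add_zero]
        | succ k =>
          rw [huk k, hz k (by omega), hv (k + 1) hi]
          congr 1
          omega
      have hlt := hNuc u v hagree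
      have hεv : g x0 ≤ g v := hx0min hvK
      rw [hguz, zero_sub, abs_neg, abs_of_nonneg (hg0 v)] at hlt
      linarith
end

section
/- Let A be finite or countably infinite and let K ⊆ X be a nonempty subset. The following are equivalent: (i) K has property G; (ii) K has a g-function; (iii) K has a strict g-function. -/
open Metric TopologicalSpace


variable {A : Type*}

set_option linter.unusedSectionVars false

section Aux
variable [Nonempty A] [Countable A] [TopologicalSpace A] [DiscreteTopology A]

lemma continuous_shiftMap' : Continuous (shiftMap : (ℕ → A) → ℕ → A) :=
  continuous_pi fun n => continuous_apply (n + 1)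

lemma continuous_extend' (a : A) : Continuous (fun x : ℕ → A => extend x a) := by
  apply continuous_pi
  intro n
  cases n with
  | zero => exact continuous_const
  | succ n => exact continuous_apply n

lemma extend_shift' (y : ℕ → A) : extend (shiftMap y) (y 0) = y := by
  funext n; cases n <;> rfl

lemma exists_vanishing (C : Set (ℕ → A)) (hC : IsClosed C) :
    ∃ D : (ℕ → A) → ℝ, Continuous D ∧ (∀ y, 0 ≤ D y) ∧ (∀ y, D y ≤ 1) ∧
      ∀ y, D y = 0 ↔ y ∈ C := by
  letI : MetricSpace (ℕ → A) := metrizableSpaceMetric (ℕ → A)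
  rcases C.eq_empty_or_nonempty with rfl | hne
  · exact ⟨fun _ => 1, continuous_const, fun _ => zero_le_one, fun _ => le_refl _,
      fun y => by simp⟩
  · refine ⟨fun y => min 1 (infDist y C), continuous_const.min (continuous_infDist_pt C),
      fun y => le_min zero_le_one (infDist_nonneg), fun y => min_le_left _ _, fun y => ?_⟩
    show min 1 (infDist y C) = 0 ↔ y ∈ C
    rw [hC.mem_iff_infDist_zero hne]
    constructor
    · intro h0
      by_contra hne0
      have hpos : 0 < infDist y C := infDist_nonneg.lt_of_ne' hne0
      exact (lt_min one_pos hpos).ne' h0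
    · intro h0
      rw [h0]
      simp

lemma propertyG_of_gFunction {K : Set (ℕ → A)} {g : (ℕ → A) → ℝ}
    (hg : IsGFunction g) (hinv : InvariantFor K g) : PropertyG K := by
  rintro ⟨x, hx⟩
  have hzero : ∀ y ∈ closure (exitSet K), g y = 0 := by
    have : closure (exitSet K) ⊆ g ⁻¹' {0} :=
      closure_minimal (fun z hz => hinv z hz) (isClosed_singleton.preimage hg.1)
    exact fun y hy => this hy
  have h1 := hg.2.2.2 x
  rw [show (fun a => g (extend x a)) = fun _ => (0 : ℝ) from
    funext fun a => hzero _ (hx a)] at h1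
  exact one_ne_zero (h1.unique hasSum_zero)

lemma exists_strict {K : Set (ℕ → A)} (hG : PropertyG K) :
    ∃ g : (ℕ → A) → ℝ, IsGFunction g ∧ InvariantFor K g ∧
      {x : ℕ → A | g x = 0} = closure (exitSet K) := by
  obtain ⟨ι, hι⟩ := exists_injective_nat A
  obtain ⟨D, Dcont, D0, D1, Dzero⟩ := exists_vanishing (closure (exitSet K)) isClosed_closure
  set C := closure (exitSet K) with hCdef
  -- weights
  set w : A → ℝ := fun a => (1 / 2 : ℝ) ^ (ι a) with hw
  have hw_pos : ∀ a, 0 < w a := fun a => pow_pos (by norm_num) _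
  have hw_sum : Summable w := summable_geometric_two.comp_injective hι
  -- h
  set h : (ℕ → A) → ℝ := fun y => D y * w (y 0) with hh
  have hcont : Continuous h := Dcont.mul
    ((continuous_of_discreteTopology (f := w)).comp (continuous_apply 0))
  have h0 : ∀ y, 0 ≤ h y := fun y => mul_nonneg (D0 y) (hw_pos _).le
  have hle_w : ∀ y, h y ≤ w (y 0) := fun y => by
    calc D y * w (y 0) ≤ 1 * w (y 0) := by
          exact mul_le_mul_of_nonneg_right (D1 y) (hw_pos _).le
      _ = w (y 0) := one_mul _
  have hzero : ∀ y, h y = 0 ↔ y ∈ C := by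
    intro y
    rw [hh]
    simp only [mul_eq_zero, (hw_pos (y 0)).ne', or_false]
    exact Dzero y
  -- summability
  have hsum : ∀ x : ℕ → A, Summable (fun a : A => h (extend x a)) := by
    intro x
    exact Summable.of_nonneg_of_le (fun a => h0 _) (fun a => hle_w _) hw_sum
  set S : (ℕ → A) → ℝ := fun x => ∑' a, h (extend x a) with hS
  have Scont : Continuous S := by
    apply continuous_tsum (fun a => hcont.comp (continuous_extend' a)) hw_sum
    intro a x
    show ‖h (extend x a)‖ ≤ w a
    rw [Real.norm_of_nonneg (h0 _)]
    exact hle_w _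
  have hGx : ∀ x : ℕ → A, ∃ a, extend x a ∉ C := by
    intro x
    by_contra hcon
    push_neg at hcon
    exact hG ⟨x, hcon⟩
  have Spos : ∀ x, 0 < S x := by
    intro x
    obtain ⟨a, ha⟩ := hGx x
    have hpos : 0 < h (extend x a) := by
      rcases (h0 (extend x a)).lt_or_eq with h' | h'
      · exact h'
      · exact absurd ((hzero _).mp h'.symm) ha
    exact lt_of_lt_of_le hpos (Summable.le_tsum (hsum x) a (fun b _ => h0 _))
  -- the g-function
  refine ⟨fun y => h y / S (shiftMap y), ⟨?_, ?_, ?_, ?_⟩, ?_, ?_⟩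
  · exact hcont.div (Scont.comp continuous_shiftMap') (fun y => (Spos _).ne')
  · exact fun y => div_nonneg (h0 y) (Spos _).le
  · intro y
    rw [div_le_one (Spos _)]
    calc h y = h (extend (shiftMap y) (y 0)) := by rw [extend_shift']
      _ ≤ S (shiftMap y) := Summable.le_tsum (hsum (shiftMap y)) _ (fun b _ => h0 _)
  · intro x
    have : (fun a : A => h (extend x a) / S (shiftMap (extend x a)))
        = fun a : A => h (extend x a) / S x := rfl
    rw [this]
    have := ((hsum x).hasSum.div_const (S x))
    rwa [div_self (Spos x).ne'] at this
  · intro x hx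
    have : h x = 0 := (hzero x).mpr (subset_closure hx)
    simp [this]
  · ext y
    simp only [Set.mem_setOf_eq]
    rw [div_eq_zero_iff]
    simp only [(Spos (shiftMap y)).ne', or_false]
    exact hzero y

end Aux

theorem propertyG_iff_gFunction_iff_strict_gFunction
    [Nonempty A] [Countable A] [TopologicalSpace A] [DiscreteTopology A]
    (K : Set (ℕ → A)) (hK : K.Nonempty) :
    (PropertyG K ↔ ∃ g : (ℕ → A) → ℝ, IsGFunction g ∧ InvariantFor K g) ∧
      ((∃ g : (ℕ → A) → ℝ, IsGFunction g ∧ InvariantFor K g) ↔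
        ∃ g : (ℕ → A) → ℝ, IsGFunction g ∧ InvariantFor K g ∧
          {x : ℕ → A | g x = 0} = closure (exitSet K)) := by
  constructor
  · constructor
    · intro hG
      obtain ⟨g, h1, h2, _⟩ := exists_strict hG
      exact ⟨g, h1, h2⟩
    · rintro ⟨g, h1, h2⟩
      exact propertyG_of_gFunction h1 h2
  · constructor
    · rintro ⟨g, h1, h2⟩
      exact exists_strict (propertyG_of_gFunction h1 h2)
    · rintro ⟨g, h1, h2, _⟩
      exact ⟨g, h1, h2⟩
end
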